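/- In ℂ[S₃], the elements ξ_ν (for every ν ∈ ℂ) and η are idempotents: ξ_ν·ξ_ν = ξ_ν and η·η = η. Each of the right ideals ξ_ν·ℂ[S₃] and η·ℂ[S₃] is a minimal right ideal of ℂ-dimension 2, and every minimal right ideal of ℂ[S₃] of ℂ-dimension 2 is generated by exactly one element of the family {η} ∪ {ξ_ν : ν ∈ ℂ}. -/

import Mathlib

/-- The idempotent `ξ_ν = (1/3)(id + ν(2 3) + (1−ν)(1 2) − ν·c + (ν−1)·c² − (1 3))` of
`ℂ[S₃]`, where `c` is the 3-cycle `1↦2↦3↦1` (0-based: `finRotate 3`, and the transpositions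
`(2 3), (1 2), (1 3)` are `swap 1 2`, `swap 0 1`, `swap 0 2`). -/
noncomputable def xi (ν : ℂ) : MonoidAlgebra ℂ (Equiv.Perm (Fin 3)) :=
  (3⁻¹ : ℂ) • (MonoidAlgebra.single 1 1
    + ν • MonoidAlgebra.single (Equiv.swap (1 : Fin 3) 2) 1
    + (1 - ν) • MonoidAlgebra.single (Equiv.swap (0 : Fin 3) 1) 1
    - ν • MonoidAlgebra.single (finRotate 3) 1
    + (ν - 1) • MonoidAlgebra.single (finRotate 3 * finRotate 3) 1
    - MonoidAlgebra.single (Equiv.swap (0 : Fin 3) 2) 1)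

/-- The idempotent `η = (1/3)(id − (1 2) − c + (1 3))` of `ℂ[S₃]`. -/
noncomputable def eta : MonoidAlgebra ℂ (Equiv.Perm (Fin 3)) :=
  (3⁻¹ : ℂ) • (MonoidAlgebra.single 1 1
    - MonoidAlgebra.single (Equiv.swap (0 : Fin 3) 1) 1
    - MonoidAlgebra.single (finRotate 3) 1
    + MonoidAlgebra.single (Equiv.swap (0 : Fin 3) 2) 1)

/-- A (ℂ-subspace) right ideal of `ℂ[S₃]`: closed under right multiplication. -/
def IsRightIdeal (I : Submodule ℂ (MonoidAlgebra ℂ (Equiv.Perm (Fin 3)))) : Prop :=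
  ∀ a ∈ I, ∀ x : MonoidAlgebra ℂ (Equiv.Perm (Fin 3)), a * x ∈ I

/-- A minimal right ideal: nonzero and containing no nonzero proper right ideal. -/
def IsMinimalRightIdeal (I : Submodule ℂ (MonoidAlgebra ℂ (Equiv.Perm (Fin 3)))) : Prop :=
  IsRightIdeal I ∧ I ≠ ⊥ ∧
    ∀ J : Submodule ℂ (MonoidAlgebra ℂ (Equiv.Perm (Fin 3))),
      IsRightIdeal J → J ≤ I → J = ⊥ ∨ J = I

/-- The right ideal `e·ℂ[S₃] = {e·x : x ∈ ℂ[S₃]}` generated by `e`. -/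
noncomputable def rIdeal (e : MonoidAlgebra ℂ (Equiv.Perm (Fin 3))) :
    Submodule ℂ (MonoidAlgebra ℂ (Equiv.Perm (Fin 3))) :=
  LinearMap.range (LinearMap.mulLeft ℂ e)

/-!
The Fourier transform `ℂ[S₃] ≃ₐ ℂ × ℂ × M₂(ℂ)` (trivial, sign and standard representation)
sends `ξ_ν` and `η` to rank-one idempotents `v wᵀ` of the matrix block, with
`v = (1 + ν, 2 - ν)` and `v = (1, -1)` respectively, so they generate the right ideals
`{v uᵀ}` of matrices whose columns lie on `ℂ v`. Since `(1, 0, 0)` and `(0, 1, 0)` are central,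
a minimal right ideal lies in a single factor; dimension 2 forces the matrix factor, and there
the 2-dimensional right ideals are exactly the `{v uᵀ}`. Finally every line of `ℂ²` is spanned
by exactly one of `(1, -1)` and `(1 + ν, 2 - ν)`, `ν ∈ ℂ`.
-/

open Module

namespace Submodule

variable {K A : Type*} [CommSemiring K] [Semiring A] [Algebra K A]

/-- `IsRightIdeal` and `IsMinimalRightIdeal` above are the case `A = ℂ[S₃]` of these. -/
def IsRightIdeal (I : Submodule K A) : Prop := ∀ a ∈ I, ∀ x : A, a * x ∈ I

def IsMinimalRightIdeal (I : Submodule K A) : Prop :=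
  I.IsRightIdeal ∧ I ≠ ⊥ ∧ ∀ J : Submodule K A, J.IsRightIdeal → J ≤ I → J = ⊥ ∨ J = I

lemma IsRightIdeal.range_mulLeft_le {I : Submodule K A} (hI : I.IsRightIdeal) {e : A}
    (he : e ∈ I) : LinearMap.range (LinearMap.mulLeft K e) ≤ I := by
  rintro _ ⟨x, rfl⟩
  exact hI e he x

lemma IsMinimalRightIdeal.map_mulRight_eq_bot_or {I : Submodule K A}
    (hI : I.IsMinimalRightIdeal) {c : A} (hc : ∀ x, Commute c x) :
    I.map (LinearMap.mulRight K c) = ⊥ ∨ I.map (LinearMap.mulRight K c) = I := by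
  refine hI.2.2 _ ?_ ?_
  · rintro _ ⟨a, ha, rfl⟩ x
    refine ⟨a * x, hI.1 a ha x, ?_⟩
    simp only [LinearMap.mulRight_apply, mul_assoc, (hc x).eq]
  · rintro _ ⟨a, ha, rfl⟩
    exact hI.1 a ha c

end Submodule

namespace NonUnitalAlgHom

variable {K B C : Type*} [CommSemiring K] [Semiring B] [Algebra K B] [Semiring C] [Algebra K C]

/-- Under such an `f`, the right ideals of `B` correspond to the right ideals of `C` inside
`f B`. Examples: algebra isomorphisms, and the inclusion of a factor into a product. -/
structure IsRightIdealEmbedding (f : B →ₙₐ[K] C) : Prop where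
  injective : Function.Injective f
  exists_mul_eq : ∀ b x, ∃ y, f b * x = f (b * y)

variable {f : B →ₙₐ[K] C}

namespace IsRightIdealEmbedding

variable (hf : f.IsRightIdealEmbedding)
include hf

lemma comp {D : Type*} [Semiring D] [Algebra K D] {g : C →ₙₐ[K] D}
    (hg : g.IsRightIdealEmbedding) : (g.comp f).IsRightIdealEmbedding where
  injective := hg.injective.comp hf.injective
  exists_mul_eq b x := by
    obtain ⟨y, hy⟩ := hg.exists_mul_eq (f b) x
    obtain ⟨z, hz⟩ := hf.exists_mul_eq b y
    exact ⟨z, by simp only [comp_apply, hy, hz]⟩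

lemma map_injective : Function.Injective (Submodule.map (f : B →ₗ[K] C)) :=
  Submodule.map_injective_of_injective hf.injective

lemma isRightIdeal_map_iff {J : Submodule K B} :
    (J.map (f : B →ₗ[K] C)).IsRightIdeal ↔ J.IsRightIdeal := by
  constructor
  · intro h b hb y
    obtain ⟨b', hb', hfb'⟩ := h (f b) ⟨b, hb, rfl⟩ (f y)
    rw [← map_mul] at hfb'
    exact hf.injective hfb' ▸ hb'
  · rintro h _ ⟨b, hb, rfl⟩ x
    obtain ⟨y, hy⟩ := hf.exists_mul_eq b x
    exact ⟨b * y, h b hb y, hy.symm⟩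

lemma map_range_mulLeft (e : B) :
    (LinearMap.range (LinearMap.mulLeft K e)).map (f : B →ₗ[K] C) =
      LinearMap.range (LinearMap.mulLeft K (f e)) := by
  apply le_antisymm
  · rintro _ ⟨_, ⟨y, rfl⟩, rfl⟩
    exact ⟨f y, by simp⟩
  · rintro _ ⟨x, rfl⟩
    obtain ⟨y, hy⟩ := hf.exists_mul_eq e x
    exact ⟨e * y, ⟨y, rfl⟩, hy.symm⟩

lemma isMinimalRightIdeal_map_iff {J : Submodule K B} :
    (J.map (f : B →ₗ[K] C)).IsMinimalRightIdeal ↔ J.IsMinimalRightIdeal := by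
  have map_inj := hf.map_injective
  rw [Submodule.IsMinimalRightIdeal, Submodule.IsMinimalRightIdeal, hf.isRightIdeal_map_iff,
    ← Submodule.map_bot (f : B →ₗ[K] C), map_inj.ne_iff]
  refine and_congr_right fun _ ↦ and_congr_right fun _ ↦
    ⟨fun h J' hJ' hle ↦ ?_, fun h J' hJ' hle ↦ ?_⟩
  · have := h (J'.map (f : B →ₗ[K] C)) (hf.isRightIdeal_map_iff.mpr hJ') (Submodule.map_mono hle)
    rwa [map_inj.eq_iff, map_inj.eq_iff] at this
  · obtain ⟨J'', rfl⟩ : ∃ J'' : Submodule K B, J''.map (f : B →ₗ[K] C) = J' :=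
      ⟨_, Submodule.map_comap_eq_self (hle.trans LinearMap.map_le_range)⟩
    rw [Submodule.map_le_map_iff_of_injective hf.injective] at hle
    rw [hf.isRightIdeal_map_iff] at hJ'
    rw [map_inj.eq_iff, map_inj.eq_iff]
    exact h J'' hJ' hle

lemma finrank_map (J : Submodule K B) : finrank K (J.map (f : B →ₗ[K] C)) = finrank K J :=
  (Submodule.equivMapOfInjective _ hf.injective J).finrank_eq.symm

end IsRightIdealEmbedding

lemma isRightIdealEmbedding_inr (A : Type*) [Semiring A] [Algebra K A] :
    (inr K A B).IsRightIdealEmbedding where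
  injective := Prod.mk_right_injective 0
  exists_mul_eq b x := ⟨x.2, by ext <;> simp⟩

end NonUnitalAlgHom

lemma AlgEquiv.isRightIdealEmbedding {K B C : Type*} [CommSemiring K] [Semiring B] [Algebra K B]
    [Semiring C] [Algebra K C] (e : B ≃ₐ[K] C) :
    ((e : B →ₐ[K] C) : B →ₙₐ[K] C).IsRightIdealEmbedding where
  injective := e.injective
  exists_mul_eq b x := ⟨e.symm x, show e b * x = e (b * e.symm x) by simp⟩

namespace Submodule

variable {K A B : Type*} [Field K] [Ring A] [Algebra K A] [Ring B] [Algebra K B]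

/-- `(1, 0)` is central in `A × B`, so a minimal right ideal lies in one of the two factors. -/
lemma IsMinimalRightIdeal.exists_eq_map_inr [FiniteDimensional K A] {I : Submodule K (A × B)}
    (hI : I.IsMinimalRightIdeal) (hrank : finrank K A < finrank K I) :
    ∃ J : Submodule K B, J.IsMinimalRightIdeal ∧ finrank K J = finrank K I ∧
      I = J.map (NonUnitalAlgHom.inr K A B : B →ₗ[K] A × B) := by
  have hinr := NonUnitalAlgHom.isRightIdealEmbedding_inr (K := K) (B := B) A
  suffices hI_eq :
      I = (I.map (LinearMap.snd K A B)).map (NonUnitalAlgHom.inr K A B : B →ₗ[K] A × B) by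
    have hrank_eq := hinr.finrank_map (I.map (LinearMap.snd K A B))
    rw [← hI_eq] at hrank_eq
    rw [hI_eq, hinr.isMinimalRightIdeal_map_iff] at hI
    exact ⟨_, hI, hrank_eq.symm, hI_eq⟩
  have hc : ∀ x : A × B, Commute (1, 0) x := fun x ↦ Prod.ext (by simp) (by simp)
  have hmul : LinearMap.mulRight K ((1, 0) : A × B) =
      (LinearMap.inl K A B).comp (LinearMap.fst K A B) := by
    ext <;> simp
  rcases hI.map_mulRight_eq_bot_or hc with h | h
  · have hfst : ∀ a ∈ I, a.1 = 0 := fun a ha ↦ by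
      simpa [hmul] using (Submodule.eq_bot_iff _).mp h _ ⟨a, ha, rfl⟩
    ext x
    constructor
    · intro hx
      exact ⟨x.2, ⟨x, hx, rfl⟩, Prod.ext (hfst x hx).symm rfl⟩
    · rintro ⟨_, ⟨a, ha, rfl⟩, rfl⟩
      rwa [show (NonUnitalAlgHom.inr K A B : B →ₗ[K] A × B) (LinearMap.snd K A B a) = a from
        Prod.ext (hfst a ha).symm rfl]
  · refine absurd hrank (not_lt.mpr ?_)
    calc finrank K I ≤ finrank K (LinearMap.range (LinearMap.inl K A B)) :=
          Submodule.finrank_mono <|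
            h ▸ hmul ▸ LinearMap.map_le_range.trans (LinearMap.range_comp_le_range _ _)
      _ = finrank K A := LinearMap.finrank_range_of_inj LinearMap.inl_injective

end Submodule

namespace Matrix

variable {K n : Type*} [Field K]

/-- The matrices `v uᵀ`: those whose columns all lie on the line `K ∙ v`. -/
def lineIdeal (v : n → K) : Submodule K (Matrix n n K) :=
  LinearMap.range (vecMulVecBilin K K v)

lemma lineIdeal_smul {c : K} (hc : c ≠ 0) (v : n → K) : lineIdeal (c • v) = lineIdeal v := by
  rw [lineIdeal, map_smul, LinearMap.range_smul _ _ hc, lineIdeal]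

lemma exists_eq_smul_of_lineIdeal_le [DecidableEq n] [Nonempty n] {v w : n → K}
    (h : lineIdeal v ≤ lineIdeal w) : ∃ c : K, v = c • w := by
  obtain ⟨j⟩ := ‹Nonempty n›
  obtain ⟨u, hu⟩ := h ⟨Pi.single j 1, rfl⟩
  refine ⟨u j, funext fun i ↦ ?_⟩
  simpa [vecMulVec_apply, mul_comm] using (congrFun (congrFun hu i) j).symm

variable [Fintype n]

lemma finrank_lineIdeal {v : n → K} (hv : v ≠ 0) : finrank K (lineIdeal v) = Fintype.card n := by
  rw [lineIdeal, LinearMap.finrank_range_of_inj, finrank_fintype_fun_eq_card]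
  intro u u' h
  have : vecMulVec v (u - u') = 0 := by rw [vecMulVec_sub]; exact sub_eq_zero.mpr h
  simpa [hv, sub_eq_zero] using this

lemma isIdempotentElem_vecMulVec {v w : n → K} (h : w ⬝ᵥ v = 1) :
    IsIdempotentElem (vecMulVec v w) := by
  rw [IsIdempotentElem, vecMulVec_mul_vecMulVec, h, one_smul]

variable [DecidableEq n]

lemma isRightIdeal_lineIdeal (v : n → K) : (lineIdeal v).IsRightIdeal := by
  rintro _ ⟨u, rfl⟩ m
  exact ⟨u ᵥ* m, (vecMulVec_mul v u m).symm⟩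

lemma range_mulLeft_vecMulVec (v : n → K) {w : n → K} (hw : w ≠ 0) :
    LinearMap.range (LinearMap.mulLeft K (vecMulVec v w)) = lineIdeal v := by
  apply le_antisymm
  · rintro _ ⟨m, rfl⟩
    exact ⟨w ᵥ* m, (vecMulVec_mul v w m).symm⟩
  · rintro _ ⟨u, rfl⟩
    obtain ⟨i, hi⟩ : ∃ i, w i ≠ 0 := Function.ne_iff.mp hw
    refine ⟨vecMulVec (Pi.single i (w i)⁻¹) u, ?_⟩
    simp [vecMulVec_mul_vecMulVec, hi]

lemma isMinimalRightIdeal_lineIdeal {v : n → K} (hv : v ≠ 0) :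
    (lineIdeal v).IsMinimalRightIdeal := by
  refine ⟨isRightIdeal_lineIdeal v, ?_, fun J hJ hle ↦ or_iff_not_imp_left.mpr fun hJbot ↦ ?_⟩
  · exact (Submodule.ne_bot_iff _).mpr ⟨vecMulVec v v, ⟨v, rfl⟩, by simpa using hv⟩
  · obtain ⟨_, ha, hne⟩ := Submodule.exists_mem_ne_zero_of_ne_bot hJbot
    obtain ⟨u, rfl⟩ := hle ha
    refine le_antisymm hle ?_
    rw [← range_mulLeft_vecMulVec v (w := u) (by rintro rfl; simp at hne)]
    exact hJ.range_mulLeft_le ha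

lemma exists_eq_vecMulVec_of_det_eq_zero {A : Matrix (Fin 2) (Fin 2) K} (h : A.det = 0) :
    ∃ v w : Fin 2 → K, A = vecMulVec v w := by
  rw [det_fin_two] at h
  by_cases h00 : A 0 0 = 0
  · rcases mul_eq_zero.mp (by linear_combination -h + A 1 1 * h00 : A 0 1 * A 1 0 = 0)
      with h01 | h10
    · refine ⟨![0, 1], ![A 1 0, A 1 1], ?_⟩
      ext i j; fin_cases i <;> fin_cases j <;> simp [vecMulVec_apply, h00, h01]
    · refine ⟨![A 0 1, A 1 1], ![0, 1], ?_⟩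
      ext i j; fin_cases i <;> fin_cases j <;> simp [vecMulVec_apply, h00, h10]
  · refine ⟨![A 0 0, A 1 0], ![1, A 0 1 / A 0 0], ?_⟩
    ext i j; fin_cases i <;> fin_cases j <;> simp [vecMulVec_apply] <;> field_simp
    linear_combination h

/-- An invertible element would make the ideal everything, so it contains a rank-one matrix. -/
lemma exists_eq_lineIdeal_of_finrank_eq_two {I : Submodule K (Matrix (Fin 2) (Fin 2) K)}
    (hI : I.IsRightIdeal) (hrank : finrank K I = 2) : ∃ v ≠ 0, I = lineIdeal v := by
  obtain ⟨A, hA, hA0⟩ := Submodule.exists_mem_ne_zero_of_ne_bot (p := I) (by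
    rintro rfl; simp at hrank)
  by_cases hdet : A.det = 0
  · obtain ⟨v, w, rfl⟩ := exists_eq_vecMulVec_of_det_eq_zero hdet
    have hv : v ≠ 0 := by rintro rfl; simp at hA0
    have hw : w ≠ 0 := by rintro rfl; simp at hA0
    refine ⟨v, hv, (Submodule.eq_of_le_of_finrank_eq ?_ ?_).symm⟩
    · rw [← range_mulLeft_vecMulVec v hw]
      exact hI.range_mulLeft_le hA
    · simp [finrank_lineIdeal hv, hrank]
  · have hone : (1 : Matrix (Fin 2) (Fin 2) K) ∈ I :=
      mul_nonsing_inv A (isUnit_iff_ne_zero.mpr hdet) ▸ hI A hA A⁻¹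
    have htop : I = ⊤ := eq_top_iff.mpr fun m _ ↦ one_mul m ▸ hI 1 hone m
    rw [htop, finrank_top, finrank_matrix] at hrank
    simp at hrank

end Matrix

local notation "ℂS₃" => MonoidAlgebra ℂ (Equiv.Perm (Fin 3))
local notation "M₂" => Matrix (Fin 2) (Fin 2) ℂ

namespace SymmetricGroupThree

open Equiv MonoidAlgebra

/-- `g` acting by `eᵢ ↦ e_{g i}` on the root lattice of `S₃`, in the basis `e₀ - e₁, e₁ - e₂`. -/
def stdRepMatrix (g : Perm (Fin 3)) : Matrix (Fin 2) (Fin 2) ℤ :=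
  if g 0 = 0 then (if g 1 = 1 then !![1, 0; 0, 1] else !![1, 0; 1, -1])
  else if g 0 = 1 then (if g 1 = 0 then !![-1, 1; 0, 1] else !![0, -1; 1, -1])
  else (if g 1 = 1 then !![0, -1; -1, 0] else !![-1, 1; -1, 0])

def stdRep : Perm (Fin 3) →* Matrix (Fin 2) (Fin 2) ℤ where
  toFun := stdRepMatrix
  map_one' := by decide
  map_mul' := by decide

abbrev Wedderburn := ℂ × ℂ × M₂

noncomputable def irreps : Perm (Fin 3) →* Wedderburn :=
  MonoidHom.prod 1 (MonoidHom.prod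
    ((Int.castRingHom ℂ).toMonoidHom.comp ((Units.coeHom ℤ).comp Perm.sign))
    ((Int.castRingHom ℂ).mapMatrix.toMonoidHom.comp stdRep))

noncomputable def fourier : ℂS₃ →ₐ[ℂ] Wedderburn :=
  lift ℂ Wedderburn (Perm (Fin 3)) irreps

noncomputable def ofCoeffs (a b c d e f : ℂ) : ℂS₃ :=
  a • single 1 1 + b • single (swap 0 1) 1 + c • single (swap 1 2) 1 + d • single (swap 0 2) 1
    + e • single (finRotate 3) 1 + f • single (finRotate 3 * finRotate 3) 1

lemma fourier_ofCoeffs (a b c d e f : ℂ) :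
    fourier (ofCoeffs a b c d e f) = (a + b + c + d + e + f, a - b - c - d + e + f,
      !![a - b + c - f, b - d - e + f; c - d + e - f, a + b - c - e]) := by
  simp only [ofCoeffs, fourier, map_add, map_smul, lift_single]
  refine Prod.ext ?_ (Prod.ext ?_ ?_)
  · simp [irreps]
  · simp [irreps, sub_eq_add_neg]
  · ext i j
    fin_cases i <;> fin_cases j <;>
      simp [irreps, stdRep, stdRepMatrix, swap_apply_of_ne_of_ne, sub_eq_add_neg]

lemma finrank_groupAlgebra : finrank ℂ ℂS₃ = 6 := by
  rw [finrank_eq_card_basis (MonoidAlgebra.basis _ ℂ), Fintype.card_perm]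
  rfl

lemma finrank_wedderburn : finrank ℂ Wedderburn = 6 := by
  simp [finrank_prod, finrank_matrix]

/-- The preimage is given by Fourier inversion. -/
lemma fourier_surjective : Function.Surjective fourier := by
  rintro ⟨x, y, m⟩
  refine ⟨ofCoeffs ((x + y + 2 * m 0 0 + 2 * m 1 1) / 6)
    ((x - y - 2 * m 0 0 + 2 * m 1 0 + 2 * m 1 1) / 6)
    ((x - y + 2 * m 0 0 + 2 * m 0 1 - 2 * m 1 1) / 6) ((x - y - 2 * m 0 1 - 2 * m 1 0) / 6)
    ((x + y - 2 * m 0 0 - 2 * m 0 1 + 2 * m 1 0) / 6)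
    ((x + y + 2 * m 0 1 - 2 * m 1 0 - 2 * m 1 1) / 6), ?_⟩
  rw [fourier_ofCoeffs]
  refine Prod.ext (by ring) (Prod.ext (by ring) ?_)
  ext i j
  fin_cases i <;> fin_cases j <;> simp <;> ring

noncomputable def fourierEquiv : ℂS₃ ≃ₐ[ℂ] Wedderburn :=
  AlgEquiv.ofBijective fourier ⟨(LinearMap.injective_iff_surjective_of_finrank_eq_finrank
    (f := fourier.toLinearMap) (by rw [finrank_groupAlgebra, finrank_wedderburn])).mpr
    fourier_surjective, fourier_surjective⟩

lemma fourierEquiv_apply (x : ℂS₃) : fourierEquiv x = fourier x :=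
  rfl

noncomputable def matrixBlock : M₂ →ₙₐ[ℂ] ℂS₃ :=
  ((fourierEquiv.symm : Wedderburn →ₐ[ℂ] ℂS₃) : Wedderburn →ₙₐ[ℂ] ℂS₃).comp
    ((NonUnitalAlgHom.inr ℂ ℂ _).comp (NonUnitalAlgHom.inr ℂ ℂ _))

lemma isRightIdealEmbedding_matrixBlock : matrixBlock.IsRightIdealEmbedding :=
  ((NonUnitalAlgHom.isRightIdealEmbedding_inr ℂ).comp
    (NonUnitalAlgHom.isRightIdealEmbedding_inr ℂ)).comp fourierEquiv.symm.isRightIdealEmbedding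

lemma fourierEquiv_matrixBlock (m : M₂) : fourierEquiv (matrixBlock m) = (0, 0, m) :=
  fourierEquiv.apply_symm_apply _

end SymmetricGroupThree

open SymmetricGroupThree Matrix

lemma xi_eq_matrixBlock (ν : ℂ) :
    xi ν = matrixBlock (vecMulVec ![1 + ν, 2 - ν] ![1 / 3, 1 / 3]) := by
  have hxi : xi ν = ofCoeffs (1 / 3) ((1 - ν) / 3) (ν / 3) (-1 / 3) (-ν / 3) ((ν - 1) / 3) := by
    simp only [xi, ofCoeffs]
    module
  apply fourierEquiv.injective
  rw [fourierEquiv_matrixBlock, hxi, fourierEquiv_apply, fourier_ofCoeffs]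
  refine Prod.ext (by ring) (Prod.ext (by ring) ?_)
  ext i j
  fin_cases i <;> fin_cases j <;> simp [vecMulVec_apply] <;> ring

lemma eta_eq_matrixBlock : eta = matrixBlock (vecMulVec ![1, -1] ![2 / 3, -1 / 3]) := by
  have heta : eta = ofCoeffs (1 / 3) (-1 / 3) 0 (1 / 3) (-1 / 3) 0 := by
    simp only [eta, ofCoeffs]
    module
  apply fourierEquiv.injective
  rw [fourierEquiv_matrixBlock, heta, fourierEquiv_apply, fourier_ofCoeffs]
  refine Prod.ext (by ring) (Prod.ext (by ring) ?_)
  ext i j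
  fin_cases i <;> fin_cases j <;> simp [vecMulVec_apply] <;> ring

lemma xi_mul_self (ν : ℂ) : xi ν * xi ν = xi ν := by
  have h : ![1 / 3, 1 / 3] ⬝ᵥ ![1 + ν, 2 - ν] = 1 := by
    simp [dotProduct]
    ring
  rw [xi_eq_matrixBlock, ← map_mul, (isIdempotentElem_vecMulVec h).eq]

lemma eta_mul_self : eta * eta = eta := by
  have h : ![2 / 3, -1 / 3] ⬝ᵥ ![1, -1] = (1 : ℂ) := by
    simp [dotProduct]
    norm_num
  rw [eta_eq_matrixBlock, ← map_mul, (isIdempotentElem_vecMulVec h).eq]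

lemma rIdeal_matrixBlock_vecMulVec (v : Fin 2 → ℂ) {w : Fin 2 → ℂ} (hw : w ≠ 0) :
    rIdeal (matrixBlock (vecMulVec v w)) = (lineIdeal v).map (matrixBlock : M₂ →ₗ[ℂ] ℂS₃) := by
  rw [rIdeal, ← isRightIdealEmbedding_matrixBlock.map_range_mulLeft,
    range_mulLeft_vecMulVec v hw]

lemma rIdeal_xi (ν : ℂ) :
    rIdeal (xi ν) = (lineIdeal ![1 + ν, 2 - ν]).map (matrixBlock : M₂ →ₗ[ℂ] ℂS₃) := by
  rw [xi_eq_matrixBlock, rIdeal_matrixBlock_vecMulVec _ (by simp [funext_iff])]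

lemma rIdeal_eta : rIdeal eta = (lineIdeal ![1, -1]).map (matrixBlock : M₂ →ₗ[ℂ] ℂS₃) := by
  rw [eta_eq_matrixBlock, rIdeal_matrixBlock_vecMulVec _ (by simp [funext_iff])]

lemma isMinimalRightIdeal_map_lineIdeal {v : Fin 2 → ℂ} (hv : v ≠ 0) :
    IsMinimalRightIdeal ((lineIdeal v).map (matrixBlock : M₂ →ₗ[ℂ] ℂS₃)) :=
  isRightIdealEmbedding_matrixBlock.isMinimalRightIdeal_map_iff.mpr
    (isMinimalRightIdeal_lineIdeal hv)

lemma finrank_map_lineIdeal {v : Fin 2 → ℂ} (hv : v ≠ 0) :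
    finrank ℂ ((lineIdeal v).map (matrixBlock : M₂ →ₗ[ℂ] ℂS₃)) = 2 := by
  rw [isRightIdealEmbedding_matrixBlock.finrank_map, finrank_lineIdeal hv, Fintype.card_fin]

lemma exists_eq_map_lineIdeal {I : Submodule ℂ ℂS₃} (hI : IsMinimalRightIdeal I)
    (hrank : finrank ℂ I = 2) : ∃ v ≠ 0, I = (lineIdeal v).map (matrixBlock : M₂ →ₗ[ℂ] ℂS₃) := by
  have hΦ := fourierEquiv.isRightIdealEmbedding
  obtain ⟨I₂, hI₂, hrank₂, hI₁₂⟩ := (hΦ.isMinimalRightIdeal_map_iff.mpr hI).exists_eq_map_inr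
    (by rw [hΦ.finrank_map, hrank, finrank_self]; norm_num)
  obtain ⟨I₃, hI₃, hrank₃, hI₂₃⟩ := hI₂.exists_eq_map_inr
    (by rw [hrank₂, hΦ.finrank_map, hrank, finrank_self]; norm_num)
  obtain ⟨v, hv, rfl⟩ := exists_eq_lineIdeal_of_finrank_eq_two hI₃.1
    (by rw [hrank₃, hrank₂, hΦ.finrank_map, hrank])
  refine ⟨v, hv, hΦ.map_injective ?_⟩
  rw [hI₁₂, hI₂₃, ← Submodule.map_comp, ← Submodule.map_comp]
  congr 1
  exact LinearMap.ext fun m ↦ (fourierEquiv_matrixBlock m).symm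

lemma xi_dir_ne_zero (ν : ℂ) : ![1 + ν, 2 - ν] ≠ 0 := by
  intro h
  obtain ⟨h0, h1⟩ : 1 + ν = 0 ∧ 2 - ν = 0 := by
    simpa [funext_iff, Fin.forall_fin_two] using h
  exact three_ne_zero (by linear_combination h0 + h1 : (3 : ℂ) = 0)

lemma lineIdeal_eq_eta_or_xi {v : Fin 2 → ℂ} (hv : v ≠ 0) :
    lineIdeal v = lineIdeal ![1, -1] ∨ ∃ ν : ℂ, lineIdeal v = lineIdeal ![1 + ν, 2 - ν] := by
  by_cases hs : v 0 + v 1 = 0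
  · have h0 : v 0 ≠ 0 := fun h0 ↦ hv <| funext fun i ↦ by
      fin_cases i
      · exact h0
      · simpa using (by linear_combination hs - h0 : v 1 = 0)
    have hv_eq : v = v 0 • ![1, -1] := by
      ext i; fin_cases i <;> simp; linear_combination hs
    left
    rw [hv_eq, lineIdeal_smul h0]
  · have hxi : ![1 + (2 * v 0 - v 1) / (v 0 + v 1), 2 - (2 * v 0 - v 1) / (v 0 + v 1)] =
        (3 / (v 0 + v 1)) • v := by
      ext i; fin_cases i <;> simp <;> field_simp <;> ring
    exact Or.inr ⟨_, by rw [hxi, lineIdeal_smul (div_ne_zero three_ne_zero hs)]⟩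

lemma lineIdeal_xi_injective {ν ν' : ℂ}
    (h : lineIdeal ![1 + ν, 2 - ν] = lineIdeal ![1 + ν', 2 - ν']) : ν = ν' := by
  obtain ⟨c, hc⟩ := exists_eq_smul_of_lineIdeal_le h.le
  obtain ⟨h0, h1⟩ : 1 + ν = c * (1 + ν') ∧ 2 - ν = c * (2 - ν') := by
    simpa [funext_iff, Fin.forall_fin_two] using hc
  linear_combination h0 - (1 + ν') / 3 * (h0 + h1)

lemma lineIdeal_xi_ne_eta (ν : ℂ) : lineIdeal ![1 + ν, 2 - ν] ≠ lineIdeal ![1, -1] := by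
  intro h
  obtain ⟨c, hc⟩ := exists_eq_smul_of_lineIdeal_le h.le
  obtain ⟨h0, h1⟩ : 1 + ν = c ∧ 2 - ν = -c := by
    simpa [funext_iff, Fin.forall_fin_two] using hc
  exact three_ne_zero (by linear_combination h0 + h1 : (3 : ℂ) = 0)

lemma injOn_rIdeal : Set.InjOn rIdeal (insert eta (Set.range xi)) := by
  have hinj := isRightIdealEmbedding_matrixBlock.map_injective
  rintro _ (rfl | ⟨ν, rfl⟩) _ (rfl | ⟨ν', rfl⟩) h
  · rfl
  · rw [rIdeal_eta, rIdeal_xi] at h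
    exact absurd (hinj h).symm (lineIdeal_xi_ne_eta ν')
  · rw [rIdeal_eta, rIdeal_xi] at h
    exact absurd (hinj h) (lineIdeal_xi_ne_eta ν)
  · rw [rIdeal_xi, rIdeal_xi] at h
    rw [lineIdeal_xi_injective (hinj h)]

lemma exists_eq_rIdeal {I : Submodule ℂ ℂS₃} (hI : IsMinimalRightIdeal I)
    (hrank : finrank ℂ I = 2) : ∃ e ∈ insert eta (Set.range xi), I = rIdeal e := by
  obtain ⟨v, hv, rfl⟩ := exists_eq_map_lineIdeal hI hrank
  rcases lineIdeal_eq_eta_or_xi hv with h | ⟨ν, h⟩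
  · exact ⟨eta, Set.mem_insert _ _, by rw [rIdeal_eta, h]⟩
  · exact ⟨xi ν, Set.mem_insert_of_mem _ ⟨ν, rfl⟩, by rw [rIdeal_xi, h]⟩

theorem stmt12 :
    (∀ ν : ℂ, xi ν * xi ν = xi ν) ∧ eta * eta = eta ∧
    (∀ ν : ℂ, IsMinimalRightIdeal (rIdeal (xi ν)) ∧
      Module.finrank ℂ (rIdeal (xi ν)) = 2) ∧
    (IsMinimalRightIdeal (rIdeal eta) ∧ Module.finrank ℂ (rIdeal eta) = 2) ∧
    ∀ I : Submodule ℂ (MonoidAlgebra ℂ (Equiv.Perm (Fin 3))),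
      IsMinimalRightIdeal I → Module.finrank ℂ I = 2 →
        ∃! e : MonoidAlgebra ℂ (Equiv.Perm (Fin 3)),
          e ∈ insert eta (Set.range xi) ∧ I = rIdeal e := by
  have heta_dir : ![(1 : ℂ), -1] ≠ 0 := by simp [funext_iff]
  refine ⟨xi_mul_self, eta_mul_self, fun ν ↦ ?_, ?_, fun I hI hrank ↦ ?_⟩
  · rw [rIdeal_xi]
    exact ⟨isMinimalRightIdeal_map_lineIdeal (xi_dir_ne_zero ν),
      finrank_map_lineIdeal (xi_dir_ne_zero ν)⟩
  · rw [rIdeal_eta]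
    exact ⟨isMinimalRightIdeal_map_lineIdeal heta_dir, finrank_map_lineIdeal heta_dir⟩
  · obtain ⟨e, he, rfl⟩ := exists_eq_rIdeal hI hrank
    exact ⟨e, ⟨he, rfl⟩, fun e' ⟨he', h⟩ ↦ injOn_rIdeal he' he h.symm⟩
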